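/- arXiv:1509.02605 — 4 statements merged into one kernel-verified Lean document; each statement's English description precedes it below -/
import Mathlib

section
/- Let R be a real symmetric k×k matrix with smallest eigenvalue λ₁(R), and let D = J_{2k}·[[I_k, (√2/4)I_k], [(√2/4)I_k, -R]], where J_{2k} is the standard symplectic matrix. Then D is hyperbolic (no eigenvalue on the imaginary axis) if and only if λ₁(R) > -1/8. -/
open Matrix

theorem mem_spec_iff (n : Type*) [Fintype n] [DecidableEq n] (M : Matrix n n ℂ) (z : ℂ) :
    z ∈ spectrum ℂ M ↔ ∃ v ≠ 0, M *ᵥ v = z • v := by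
  rw [spectrum.mem_iff, Matrix.isUnit_iff_isUnit_det, isUnit_iff_ne_zero, not_not,
    ← Matrix.exists_mulVec_eq_zero_iff]
  have key : ∀ v : n → ℂ, (algebraMap ℂ (Matrix n n ℂ) z - M) *ᵥ v = z • v - M *ᵥ v := by
    intro v
    rw [Matrix.sub_mulVec, Matrix.algebraMap_eq_diagonal]
    congr 1
    ext i
    simp [Matrix.mulVec_diagonal]
  constructor
  · rintro ⟨v, hv, h⟩
    exact ⟨v, hv, by rw [key] at h; linear_combination (norm := module) -h⟩
  · rintro ⟨v, hv, h⟩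
    exact ⟨v, hv, by rw [key, h, sub_self]⟩

theorem real_spec_transfer (n : Type*) [Fintype n] [DecidableEq n] (M : Matrix n n ℝ) (μ : ℝ) :
    (μ : ℂ) ∈ spectrum ℂ (M.map Complex.ofReal) ↔ μ ∈ spectrum ℝ M := by
  rw [spectrum.mem_iff, spectrum.mem_iff, Matrix.isUnit_iff_isUnit_det,
    Matrix.isUnit_iff_isUnit_det, isUnit_iff_ne_zero, isUnit_iff_ne_zero, not_ne_iff, not_ne_iff]
  have h1 : algebraMap ℂ (Matrix n n ℂ) (μ : ℂ) - M.map Complex.ofReal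
      = (algebraMap ℝ (Matrix n n ℝ) μ - M).map Complex.ofReal := by
    rw [Matrix.map_sub _ (by push_cast; intro a b; ring)]
    congr 1
    ext i j
    simp [Matrix.algebraMap_eq_diagonal, Matrix.diagonal_apply]
    aesop
  rw [h1]
  rw [show ((algebraMap ℝ (Matrix n n ℝ)) μ - M).map Complex.ofReal
      = Complex.ofRealHom.mapMatrix ((algebraMap ℝ (Matrix n n ℝ)) μ - M) from rfl,
    ← RingHom.map_det]
  simp [Complex.ofRealHom_eq_coe]

/-- Proposition 2.1: with `R` a real symmetric `k×k` matrix and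
`D = J·[[I, (√2/4)I], [(√2/4)I, -R]]`, `D` is hyperbolic (no eigenvalue on the
imaginary axis) iff the smallest eigenvalue of `R` is `> -1/8`, i.e. iff every
real eigenvalue of `R` is `> -1/8`. -/
theorem stmt_5 (k : ℕ) (R : Matrix (Fin k) (Fin k) ℝ) (hR : R.IsSymm)
    (J D : Matrix (Fin k ⊕ Fin k) (Fin k ⊕ Fin k) ℝ)
    (hJ : J = Matrix.fromBlocks 0 (-1) 1 0)
    (hD : D = J * Matrix.fromBlocks 1 ((Real.sqrt 2 / 4) • (1 : Matrix (Fin k) (Fin k) ℝ))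
        ((Real.sqrt 2 / 4) • (1 : Matrix (Fin k) (Fin k) ℝ)) (-R)) :
    (∀ z ∈ spectrum ℂ (D.map (Complex.ofReal)), z.re ≠ 0) ↔
      (∀ μ ∈ spectrum ℝ R, μ > -(1/8)) := by
  set c : ℂ := ((Real.sqrt 2 / 4 : ℝ) : ℂ) with hcdef
  have hc2 : c ^ 2 = 1 / 8 := by
    have h8 : (Real.sqrt 2 / 4) ^ 2 = 1 / 8 := by
      rw [div_pow, Real.sq_sqrt (by norm_num : (0:ℝ) ≤ 2)]
      norm_num
    rw [hcdef, ← Complex.ofReal_pow, h8]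
    norm_num
  set Rc : Matrix (Fin k) (Fin k) ℂ := R.map Complex.ofReal with hRc
  have hDmap : D.map Complex.ofReal = fromBlocks (-(c • 1)) Rc 1 (c • 1) := by
    subst hD hJ
    rw [Matrix.fromBlocks_multiply]
    ext (i | i) (j | j) <;>
      simp [Matrix.fromBlocks, Matrix.map_apply, Rc, Matrix.one_apply, c, apply_ite] <;>
      aesop
  -- key spectral characterization
  have key : ∀ z : ℂ, z ∈ spectrum ℂ (D.map Complex.ofReal) ↔
      (z ^ 2 - 1 / 8) ∈ spectrum ℂ Rc := by
    intro z
    rw [hDmap, mem_spec_iff, mem_spec_iff]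
    constructor
    · rintro ⟨v, hv, h⟩
      set x := v ∘ Sum.inl
      set y := v ∘ Sum.inr
      have hv' : v = Sum.elim x y := by ext (i | i) <;> rfl
      rw [hv', Matrix.fromBlocks_mulVec] at h
      have h1 : -(c • 1) *ᵥ x + Rc *ᵥ y = z • x := funext fun i => congrFun h (Sum.inl i)
      have h2 : (1 : Matrix (Fin k) (Fin k) ℂ) *ᵥ x + (c • 1) *ᵥ y = z • y :=
        funext fun i => congrFun h (Sum.inr i)
      rw [Matrix.one_mulVec, Matrix.smul_mulVec, Matrix.one_mulVec] at h2
      rw [Matrix.neg_mulVec, Matrix.smul_mulVec, Matrix.one_mulVec] at h1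
      have hx : x = (z - c) • y := by
        have := h2
        linear_combination (norm := module) this
      have hy : y ≠ 0 := by
        intro hy0
        apply hv
        rw [hv', hy0, hx, hy0, smul_zero]
        ext (i | i) <;> rfl
      refine ⟨y, hy, ?_⟩
      rw [hx] at h1
      have : Rc *ᵥ y = (z ^ 2 - c ^ 2) • y := by
        have expand : z • ((z - c) • y) + c • ((z - c) • y) = (z ^ 2 - c ^ 2) • y := by
          rw [smul_smul, smul_smul, ← add_smul]; ring_nf
        linear_combination (norm := module) h1 - expand
      rw [this, hc2]
    · rintro ⟨y, hy, h⟩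
      refine ⟨Sum.elim ((z - c) • y) y, ?_, ?_⟩
      · intro h0
        apply hy
        ext i
        exact congrFun h0 (Sum.inr i)
      · rw [Matrix.fromBlocks_mulVec]
        simp only [Sum.elim_comp_inl, Sum.elim_comp_inr]
        rw [Matrix.one_mulVec, Matrix.neg_mulVec, Matrix.smul_mulVec,
          Matrix.smul_mulVec, Matrix.one_mulVec, Matrix.one_mulVec, h]
        have e1 : -(c • (z - c) • y) + (z ^ 2 - 1 / 8) • y = z • (z - c) • y := by
          rw [← hc2]; module
        have e2 : (z - c) • y + c • y = z • y := by module
        rw [e1, e2]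
        ext (i | i) <;> simp
  constructor
  · intro hyp μ hμ
    by_contra hle
    push_neg at hle
    set t : ℝ := Real.sqrt (-(μ + 1/8))
    have ht : t ^ 2 = -(μ + 1/8) := Real.sq_sqrt (by linarith)
    have hz : (Complex.I * t) ∈ spectrum ℂ (D.map Complex.ofReal) := by
      rw [key]
      have : ((Complex.I * t) ^ 2 - 1 / 8) = ((μ : ℝ) : ℂ) := by
        rw [mul_pow, Complex.I_sq,
          show ((t:ℂ)) ^ 2 = ((t ^ 2 : ℝ) : ℂ) by push_cast; ring, ht]
        push_cast
        ring
      rw [this, hRc, real_spec_transfer]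
      exact hμ
    have := hyp _ hz
    simp at this
  · intro hyp z hz hre
    rw [key] at hz
    have himz : z = Complex.I * z.im := by
      rw [Complex.ext_iff]
      simp [hre]
    have hcast : z ^ 2 - 1 / 8 = ((-(z.im ^ 2) - 1/8 : ℝ) : ℂ) := by
      conv_lhs => rw [himz]
      rw [mul_pow, Complex.I_sq]
      push_cast
      ring
    rw [hcast, hRc, real_spec_transfer] at hz
    have := hyp _ hz
    nlinarith [sq_nonneg z.im]
end

section
/- Suppose (q(τ), Q(τ)) solves q' = -(1/2)qQ, Q' = (1/2)Q² + q² - 1 on an interval [τ₁, τ₂], with q(τ) > 0 and -√2 ≤ Q(τ) ≤ -√2 + ε for all τ ∈ [τ₁, τ₂], where 0 < ε < √2. Then √2 · ln(q(τ₂)/q(τ₁)) ≤ τ₂ - τ₁ ≤ (2/(√2 - ε)) · ln(q(τ₂)/q(τ₁)). -/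
open Real Set

/-! Along the solution `(log q)' = -Q/2` lies between `(√2 - ε)/2` and `√2/2`, so by the mean
value theorem `log (q τ₂ / q τ₁)` lies between these rates times `τ₂ - τ₁`. -/

theorem HasDerivAt.log_of_self_mul {q g : ℝ → ℝ} {x : ℝ}
    (hq : HasDerivAt q (q x * g x) x) (hx : q x ≠ 0) :
    HasDerivAt (fun t => Real.log (q t)) (g x) x :=
  (hq.log hx).congr_deriv (by field_simp)

theorem mul_sub_le_log_div_le_mul_sub {q g : ℝ → ℝ} {a b m M : ℝ} (hab : a ≤ b)
    (hq : ∀ x ∈ Icc a b, HasDerivAt q (q x * g x) x) (hpos : ∀ x ∈ Icc a b, 0 < q x)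
    (hm : ∀ x ∈ Icc a b, m ≤ g x) (hM : ∀ x ∈ Icc a b, g x ≤ M) :
    m * (b - a) ≤ log (q b / q a) ∧ log (q b / q a) ≤ M * (b - a) := by
  have hlog (x) (hx : x ∈ Icc a b) : HasDerivAt (fun t => log (q t)) (g x) x :=
    (hq x hx).log_of_self_mul (hpos x hx).ne'
  have hcont : ContinuousOn (fun t => log (q t)) (Icc a b) :=
    fun x hx => (hlog x hx).continuousAt.continuousWithinAt
  have hdiff : DifferentiableOn ℝ (fun t => log (q t)) (interior (Icc a b)) :=
    fun x hx => (hlog x (interior_subset hx)).differentiableAt.differentiableWithinAt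
  have hderiv (x) (hx : x ∈ interior (Icc a b)) : deriv (fun t => log (q t)) x = g x :=
    (hlog x (interior_subset hx)).deriv
  have ha := left_mem_Icc.2 hab
  have hb := right_mem_Icc.2 hab
  rw [log_div (hpos b hb).ne' (hpos a ha).ne']
  exact ⟨(convex_Icc a b).mul_sub_le_image_sub_of_le_deriv hcont hdiff
      (fun x hx => hderiv x hx ▸ hm x (interior_subset hx)) a ha b hb hab,
    (convex_Icc a b).image_sub_le_mul_sub_of_deriv_le hcont hdiff
      (fun x hx => hderiv x hx ▸ hM x (interior_subset hx)) a ha b hb hab⟩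

theorem stmt_6_general (q Q : ℝ → ℝ) (τ₁ τ₂ ε : ℝ) (hτ : τ₁ ≤ τ₂)
    (hε : ε < Real.sqrt 2)
    (hq : ∀ τ ∈ Set.Icc τ₁ τ₂, HasDerivAt q (-(1/2) * q τ * Q τ) τ)
    (hqpos : ∀ τ ∈ Set.Icc τ₁ τ₂, 0 < q τ)
    (hQlb : ∀ τ ∈ Set.Icc τ₁ τ₂, -Real.sqrt 2 ≤ Q τ)
    (hQub : ∀ τ ∈ Set.Icc τ₁ τ₂, Q τ ≤ -Real.sqrt 2 + ε) :
    Real.sqrt 2 * Real.log (q τ₂ / q τ₁) ≤ τ₂ - τ₁ ∧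
    τ₂ - τ₁ ≤ (2 / (Real.sqrt 2 - ε)) * Real.log (q τ₂ / q τ₁) := by
  obtain ⟨hlower, hupper⟩ := mul_sub_le_log_div_le_mul_sub (g := fun τ => -(1/2) * Q τ)
    (m := (√2 - ε) / 2) (M := √2 / 2) hτ
    (fun τ hτ' => (hq τ hτ').congr_deriv (by ring)) hqpos
    (fun τ hτ' => by linarith [hQub τ hτ']) (fun τ hτ' => by linarith [hQlb τ hτ'])
  have hsq : √2 * √2 = 2 := mul_self_sqrt zero_le_two
  constructor
  · nlinarith [sqrt_nonneg 2]
  · rw [div_mul_eq_mul_div, le_div_iff₀ (sub_pos.2 hε)]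
    linarith

/-- Lemma 2.1(a): along a solution with `q > 0` and `-√2 ≤ Q ≤ -√2 + ε`,
`√2 ln(q(τ₂)/q(τ₁)) ≤ τ₂ - τ₁ ≤ (2/(√2-ε)) ln(q(τ₂)/q(τ₁))`. -/
theorem stmt_6 (q Q : ℝ → ℝ) (τ₁ τ₂ ε : ℝ) (hτ : τ₁ ≤ τ₂)
    (hε0 : 0 < ε) (hε : ε < Real.sqrt 2)
    (hq : ∀ τ ∈ Set.Icc τ₁ τ₂, HasDerivAt q (-(1/2) * q τ * Q τ) τ)
    (hQ : ∀ τ ∈ Set.Icc τ₁ τ₂, HasDerivAt Q ((1/2) * (Q τ)^2 + (q τ)^2 - 1) τ)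
    (hqpos : ∀ τ ∈ Set.Icc τ₁ τ₂, 0 < q τ)
    (hQlb : ∀ τ ∈ Set.Icc τ₁ τ₂, -Real.sqrt 2 ≤ Q τ)
    (hQub : ∀ τ ∈ Set.Icc τ₁ τ₂, Q τ ≤ -Real.sqrt 2 + ε) :
    Real.sqrt 2 * Real.log (q τ₂ / q τ₁) ≤ τ₂ - τ₁ ∧
    τ₂ - τ₁ ≤ (2 / (Real.sqrt 2 - ε)) * Real.log (q τ₂ / q τ₁) :=
  stmt_6_general q Q τ₁ τ₂ ε hτ hε hq hqpos hQlb hQub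
end

section
/- Suppose (q(τ), Q(τ)) solves q' = -(1/2)qQ, Q' = (1/2)Q² + q² - 1 on [τ₁, τ₂], with 0 < q(τ) ≤ ε and -√2 ≤ Q(τ) ≤ -√2 + ε for all τ, where 0 < ε < √2, and q(τ₂) = ε. Then ∫_{τ₁}^{τ₂} q(τ) dτ ≤ 2ε/(√2 - ε). -/
open Real Set intervalIntegral

/-- Lemma 2.1(b): along a solution with `0 < q ≤ ε`, `-√2 ≤ Q ≤ -√2 + ε`, and
`q(τ₂) = ε`, one has `∫_{τ₁}^{τ₂} q ≤ 2ε/(√2 - ε)`. -/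
theorem stmt_7 (q Q : ℝ → ℝ) (τ₁ τ₂ ε : ℝ) (hτ : τ₁ ≤ τ₂)
    (hε0 : 0 < ε) (hε : ε < Real.sqrt 2)
    (hq : ∀ τ ∈ Set.Icc τ₁ τ₂, HasDerivAt q (-(1/2) * q τ * Q τ) τ)
    (hQ : ∀ τ ∈ Set.Icc τ₁ τ₂, HasDerivAt Q ((1/2) * (Q τ)^2 + (q τ)^2 - 1) τ)
    (hqpos : ∀ τ ∈ Set.Icc τ₁ τ₂, 0 < q τ)
    (hqub : ∀ τ ∈ Set.Icc τ₁ τ₂, q τ ≤ ε)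
    (hQlb : ∀ τ ∈ Set.Icc τ₁ τ₂, -Real.sqrt 2 ≤ Q τ)
    (hQub : ∀ τ ∈ Set.Icc τ₁ τ₂, Q τ ≤ -Real.sqrt 2 + ε)
    (hend : q τ₂ = ε) :
    ∫ τ in τ₁..τ₂, q τ ≤ 2 * ε / (Real.sqrt 2 - ε) := by
  have huIcc : Set.uIcc τ₁ τ₂ = Set.Icc τ₁ τ₂ := Set.uIcc_of_le hτ
  have hcpos : 0 < (Real.sqrt 2 - ε) / 2 := by linarith
  have hqc : ContinuousOn q (Set.Icc τ₁ τ₂) := fun τ h =>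
    (hq τ h).continuousAt.continuousWithinAt
  have hQc : ContinuousOn Q (Set.Icc τ₁ τ₂) := fun τ h =>
    (hQ τ h).continuousAt.continuousWithinAt
  have hq'c : ContinuousOn (fun τ => -(1/2) * q τ * Q τ) (Set.Icc τ₁ τ₂) :=
    ((continuousOn_const.mul hqc).mul hQc)
  have hq'i : IntervalIntegrable (fun τ => -(1/2) * q τ * Q τ) MeasureTheory.volume τ₁ τ₂ :=
    (hq'c.mono huIcc.subset).intervalIntegrable
  have hqi : IntervalIntegrable q MeasureTheory.volume τ₁ τ₂ :=
    (hqc.mono huIcc.subset).intervalIntegrable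
  have hftc : ∫ τ in τ₁..τ₂, -(1/2) * q τ * Q τ = q τ₂ - q τ₁ := by
    apply intervalIntegral.integral_eq_sub_of_hasDerivAt
    · intro τ hτ'; exact hq τ (huIcc ▸ hτ')
    · exact hq'i
  have hmono : ∫ τ in τ₁..τ₂, ((Real.sqrt 2 - ε) / 2) * q τ ≤
      ∫ τ in τ₁..τ₂, -(1/2) * q τ * Q τ := by
    apply intervalIntegral.integral_mono_on hτ (hqi.const_mul _) hq'i
    intro τ hτ'
    have h1 := hqpos τ hτ'
    have h2 := hQub τ hτ'
    nlinarith
  rw [intervalIntegral.integral_const_mul, hftc] at hmono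
  have hq1 : 0 < q τ₁ := hqpos τ₁ ⟨le_refl _, hτ⟩
  rw [le_div_iff₀ (by linarith : (0:ℝ) < Real.sqrt 2 - ε)]
  nlinarith [hmono, hq1, hend]
end

section
/- Let f : ℝ → ℝ be continuous with f > 0 everywhere, bounded, and let y : ℝ → ℝ be a C² solution of y'' = f·y on ℝ. If y is bounded together with y', and y(τ)y'(τ) → 0 as τ → -∞, and y(t₂)·y'(t₂) ≤ 0 at some t₂, then y vanishes identically on (-∞, t₂]. -/
open Filter

/-- The vanishing argument behind Lemma 4.6: for a bounded solution of
`y'' = f·y` with `f > 0` bounded, `y y' → 0` at `-∞` and `y(t₂)y'(t₂) ≤ 0`,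
`y` vanishes on `(-∞, t₂]`. -/
theorem stmt_12 (f y y' : ℝ → ℝ) (t₂ : ℝ)
    (hf : Continuous f) (hfpos : ∀ t, 0 < f t) (hfbdd : ∃ C, ∀ t, f t ≤ C)
    (hy : ∀ t, HasDerivAt y (y' t) t)
    (hy' : ∀ t, HasDerivAt y' (f t * y t) t)
    (hybdd : ∃ C, ∀ t, |y t| ≤ C) (hy'bdd : ∃ C, ∀ t, |y' t| ≤ C)
    (hlim : Tendsto (fun t => y t * y' t) atBot (nhds 0))
    (hend : y t₂ * y' t₂ ≤ 0) :
    ∀ t ≤ t₂, y t = 0 := by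
  set g : ℝ → ℝ := fun t => y t * y' t with hgdef
  have hgd : ∀ t, HasDerivAt g (y' t * y' t + y t * (f t * y t)) t := fun t =>
    (hy t).mul (hy' t)
  have hgd0 : ∀ t, 0 ≤ y' t * y' t + y t * (f t * y t) := by
    intro t
    nlinarith [mul_self_nonneg (y t), mul_self_nonneg (y' t), (hfpos t).le]
  have hmono : Monotone g := by
    apply monotone_of_deriv_nonneg
    · exact fun t => (hgd t).differentiableAt
    · intro t; rw [(hgd t).deriv]; exact hgd0 t
  have hge : ∀ t, 0 ≤ g t := fun t =>
    le_of_tendsto hlim (eventually_atBot.2 ⟨t, fun s hs => hmono hs⟩)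
  have hg0 : ∀ t ≤ t₂, g t = 0 := fun t ht =>
    le_antisymm (le_trans (hmono ht) hend) (hge t)
  have hy0lt : ∀ t < t₂, y t = 0 := by
    intro t ht
    have hconst : HasDerivAt g 0 t := by
      have heq : g =ᶠ[nhds t] fun _ => (0 : ℝ) := by
        filter_upwards [Iio_mem_nhds ht] with s hs
        exact hg0 s (le_of_lt hs)
      exact (hasDerivAt_const t (0 : ℝ)).congr_of_eventuallyEq heq
    have huni : (0 : ℝ) = y' t * y' t + y t * (f t * y t) :=
      hconst.unique (hgd t)
    have h3 : y t * y t ≤ 0 := by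
      nlinarith [hfpos t, mul_self_nonneg (y' t), mul_self_nonneg (y t)]
    have h4 : y t * y t = 0 := le_antisymm h3 (mul_self_nonneg _)
    exact mul_self_eq_zero.mp h4
  intro t ht
  rcases lt_or_eq_of_le ht with h | h
  · exact hy0lt t h
  · subst h
    have h1 : Tendsto y (nhdsWithin t (Set.Iio t)) (nhds (y t)) :=
      ((hy t).continuousAt.continuousWithinAt).tendsto
    have h2 : Tendsto y (nhdsWithin t (Set.Iio t)) (nhds 0) := by
      apply Tendsto.congr' _ tendsto_const_nhds
      filter_upwards [self_mem_nhdsWithin] with s hs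
      exact (hy0lt s hs).symm
    exact tendsto_nhds_unique h1 h2
end
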